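/- The piecewise function ψ(w) defined as L for w ∈ [0, C/α) and ((L - p_max)/e)*exp(α*w/C) + p_max for w ∈ [C/α, C], where 0 < p_max ≤ L, C > 0, α ≥ 1, is convex on [0, C]. -/
import Mathlib

theorem psi_convex (L pmax C α : ℝ) (hp : 0 < pmax) (hpL : pmax ≤ L) (hC : 0 < C)
    (hα : 1 ≤ α)
    (ψ : ℝ → ℝ)
    (hψ : ψ = fun w => if w < C / α then L
      else ((L - pmax) / Real.exp 1) * Real.exp (α * w / C) + pmax) :
    ConvexOn ℝ (Set.Icc 0 C) ψ := by
  have hc : 0 ≤ (L - pmax) / Real.exp 1 := div_nonneg (by linarith) (Real.exp_pos 1).le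
  have hα0 : 0 < α := lt_of_lt_of_le one_pos hα
  -- the exp piece
  have hexp : ConvexOn ℝ (Set.Icc 0 C)
      (fun w : ℝ => ((L - pmax) / Real.exp 1) * Real.exp (α * w / C) + pmax) := by
    have h1 : ConvexOn ℝ (Set.Icc 0 C) (fun w : ℝ => Real.exp (α * w / C)) := by
      have := (convexOn_exp.subset (Set.subset_univ _) convex_univ).comp_affineMap
        (AffineMap.mk (fun w : ℝ => α * w / C)
          (LinearMap.mk (AddHom.mk (fun w : ℝ => α * w / C) (by intro x y; ring))
            (by intro m x; simp [smul_eq_mul]; ring)) (by intro p v; simp; ring))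
      exact this.subset (Set.subset_univ _) (convex_Icc 0 C)
    exact (h1.smul hc).add_const pmax
  have hmax : ConvexOn ℝ (Set.Icc 0 C)
      (fun w : ℝ => max L (((L - pmax) / Real.exp 1) * Real.exp (α * w / C) + pmax)) :=
    (convexOn_const L (convex_Icc 0 C)).sup hexp
  refine hmax.congr ?_
  intro x hx
  simp only []
  subst hψ
  by_cases h : x < C / α
  · have hle : α * x / C ≤ 1 := by
      rw [div_le_one hC]
      have := (lt_div_iff₀ hα0).mp h
      nlinarith
    have : ((L - pmax) / Real.exp 1) * Real.exp (α * x / C) + pmax ≤ L := by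
      have h1 : ((L - pmax) / Real.exp 1) * Real.exp (α * x / C)
          ≤ ((L - pmax) / Real.exp 1) * Real.exp 1 :=
        mul_le_mul_of_nonneg_left (Real.exp_le_exp.mpr hle) hc
      have h2 : ((L - pmax) / Real.exp 1) * Real.exp 1 = L - pmax := by
        field_simp
      linarith
    simp [h, max_eq_left this]
  · have hge : 1 ≤ α * x / C := by
      push_neg at h
      rw [le_div_iff₀ hC]
      have := (div_le_iff₀ hα0).mp h
      nlinarith
    have : L ≤ ((L - pmax) / Real.exp 1) * Real.exp (α * x / C) + pmax := by
      have h1 : ((L - pmax) / Real.exp 1) * Real.exp 1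
          ≤ ((L - pmax) / Real.exp 1) * Real.exp (α * x / C) :=
        mul_le_mul_of_nonneg_left (Real.exp_le_exp.mpr hge) hc
      have h2 : ((L - pmax) / Real.exp 1) * Real.exp 1 = L - pmax := by
        field_simp
      linarith
    simp [h, max_eq_right this]
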